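/- arXiv:1204.1430 — 4 statements merged into one kernel-verified Lean document; each statement's English description precedes it below -/
import Mathlib

section
/- Let (X, μ) be a σ-finite measure space and u ∈ L^{2,∞}(X) a measurable function. Suppose A ⊂ X is measurable with μ(A) ≤ C₀ e^{2ρR} and that |u| ≤ C₁ ‖u‖_{2,∞} e^{αR} on A, for constants C₀, C₁, ρ, α > 0 and R ≥ 1. Then ∫_A |u|² dμ ≤ C ‖u‖²_{2,∞} R, where C depends only on C₀, C₁, ρ, α. -/
open MeasureTheory Set
open scoped ENNReal

/-! By the layer-cake formula `∫_A |u|² = ∫_0^∞ μ(A ∩ {|u|² > t}) dt`. The integrand is at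
most `μ(A) ≲ e^{2ρR}` for small `t`, at most `‖u‖²_{2,∞} / t` by the weak-L² bound, and
vanishes above `sup_A |u|² ≲ ‖u‖²_{2,∞} e^{2αR}`. Switching from the first bound to the second at
`t₀ = ‖u‖²_{2,∞} / μ(A)`, the first range contributes `‖u‖²_{2,∞}` and the second
`‖u‖²_{2,∞} log (sup_A |u|² / t₀) = ‖u‖²_{2,∞} O(R)`. -/

theorem lintegral_Ioc_ofReal_div {K t₀ T : ℝ} (hK : 0 ≤ K) (ht₀ : 0 < t₀)
    (hT : t₀ ≤ T) :
    ∫⁻ t in Ioc t₀ T, ENNReal.ofReal (K / t) = ENNReal.ofReal (K * Real.log (T / t₀)) := by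
  have hint : IntegrableOn (fun t : ℝ => K / t) (Ioc t₀ T) :=
    ((continuousOn_const.div continuousOn_id fun t ht => (ht₀.trans_le ht.1).ne').integrableOn_Icc
      ).mono_set Ioc_subset_Icc_self
  rw [← ofReal_integral_eq_lintegral_ofReal hint
    ((ae_restrict_iff' measurableSet_Ioc).mpr (ae_of_all _ fun t ht =>
      div_nonneg hK (ht₀.trans ht.1).le)),
    ← intervalIntegral.integral_of_le hT]
  simp only [div_eq_mul_inv, intervalIntegral.integral_const_mul,
    integral_inv_of_pos ht₀ (ht₀.trans_le hT)]

theorem lintegral_le_of_meas_lt_le {X : Type*} [MeasurableSpace X] {ν : Measure X} {f : X → ℝ}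
    (hf_nonneg : 0 ≤ᵐ[ν] f) (hf : AEMeasurable f ν) {a K B : ℝ} (ha : 0 < a) (hK : 0 < K)
    (hB : 1 ≤ B) (hν : ν univ ≤ ENNReal.ofReal a)
    (hdist : ∀ t, 0 < t → ν {x | t < f x} ≤ ENNReal.ofReal (K / t))
    (hT : ∀ᵐ x ∂ν, f x ≤ K / a * B) :
    ∫⁻ x, ENNReal.ofReal (f x) ∂ν ≤ ENNReal.ofReal (K * (1 + Real.log B)) := by
  set t₀ := K / a
  have ht₀ : 0 < t₀ := div_pos hK ha
  have hcover : Ioi (0 : ℝ) ⊆ (Ioc 0 t₀ ∪ Ioc t₀ (t₀ * B)) ∪ Ioi (t₀ * B) := by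
    intro t ht
    rcases le_or_gt t t₀ with h₁ | h₁
    · exact Or.inl (Or.inl ⟨ht, h₁⟩)
    rcases le_or_gt t (t₀ * B) with h₂ | h₂
    · exact Or.inl (Or.inr ⟨h₁, h₂⟩)
    · exact Or.inr h₂
  have hlow : ∫⁻ t in Ioc 0 t₀, ν {x | t < f x} ≤ ENNReal.ofReal K := by
    calc ∫⁻ t in Ioc 0 t₀, ν {x | t < f x} ≤ ∫⁻ _ in Ioc 0 t₀, ENNReal.ofReal a :=
          lintegral_mono fun t => (measure_mono (subset_univ _)).trans hν
      _ = ENNReal.ofReal K := by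
          rw [setLIntegral_const, Real.volume_Ioc, sub_zero, ← ENNReal.ofReal_mul ha.le,
            mul_div_cancel₀ _ ha.ne']
  have hmid : ∫⁻ t in Ioc t₀ (t₀ * B), ν {x | t < f x} ≤ ENNReal.ofReal (K * Real.log B) := by
    calc ∫⁻ t in Ioc t₀ (t₀ * B), ν {x | t < f x}
        ≤ ∫⁻ t in Ioc t₀ (t₀ * B), ENNReal.ofReal (K / t) :=
          setLIntegral_mono' measurableSet_Ioc fun t ht => hdist t (ht₀.trans ht.1)
      _ = ENNReal.ofReal (K * Real.log B) := by
          rw [lintegral_Ioc_ofReal_div hK.le ht₀ (le_mul_of_one_le_right ht₀.le hB),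
            mul_div_cancel_left₀ _ ht₀.ne']
  have hhigh : ∫⁻ t in Ioi (t₀ * B), ν {x | t < f x} ≤ 0 := by
    have hnull : ∀ t ∈ Ioi (t₀ * B), ν {x | t < f x} = 0 := fun t ht =>
      measure_mono_null (fun x hx => not_le.mpr (lt_trans ht hx)) (ae_iff.mp hT)
    exact (setLIntegral_mono' measurableSet_Ioi fun t ht => (hnull t ht).le).trans (by simp)
  calc ∫⁻ x, ENNReal.ofReal (f x) ∂ν = ∫⁻ t in Ioi 0, ν {x | t < f x} :=
        lintegral_eq_lintegral_meas_lt ν hf_nonneg hf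
    _ ≤ ∫⁻ t in (Ioc 0 t₀ ∪ Ioc t₀ (t₀ * B)) ∪ Ioi (t₀ * B), ν {x | t < f x} :=
        lintegral_mono_set hcover
    _ ≤ ENNReal.ofReal K + ENNReal.ofReal (K * Real.log B) + 0 :=
        (lintegral_union_le _ _ _).trans
          (add_le_add ((lintegral_union_le _ _ _).trans (add_le_add hlow hmid)) hhigh)
    _ = ENNReal.ofReal (K * (1 + Real.log B)) := by
        rw [add_zero, ← ENNReal.ofReal_add hK.le (mul_nonneg hK.le (Real.log_nonneg hB)),
          mul_one_add]

theorem meas_lt_sq_norm_le {X E : Type*} [MeasurableSpace X] [SeminormedAddGroup E]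
    {μ : Measure X} {u : X → E} {W : ℝ}
    (hweak : ∀ s : ℝ, 0 < s → μ {x | s < ‖u x‖} ≤ ENNReal.ofReal (W ^ 2 / s ^ 2))
    {t : ℝ} (ht : 0 < t) : μ {x | t < ‖u x‖ ^ 2} ≤ ENNReal.ofReal (W ^ 2 / t) := by
  have hset : {x | t < ‖u x‖ ^ 2} = {x | √t < ‖u x‖} := by
    ext x
    exact (Real.sqrt_lt ht.le (norm_nonneg (u x))).symm
  simpa only [hset, Real.sq_sqrt ht.le] using hweak √t (Real.sqrt_pos.mpr ht)

theorem sq_le_of_le_mul_exp {C₀ C₁ ρ α R W y : ℝ} (hC₀ : 0 < C₀) (hy₀ : 0 ≤ y)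
    (hy : y ≤ C₁ * W * Real.exp (α * R)) :
    y ^ 2 ≤ W ^ 2 / (C₀ * Real.exp (2 * ρ * R)) *
      ((1 + C₀ * C₁ ^ 2) * Real.exp ((2 * α + 2 * ρ) * R)) := by
  have hsq : y ^ 2 ≤ C₁ ^ 2 * W ^ 2 * Real.exp (2 * α * R) := by
    calc y ^ 2 ≤ (C₁ * W * Real.exp (α * R)) ^ 2 := pow_le_pow_left₀ hy₀ hy 2
      _ = C₁ ^ 2 * W ^ 2 * Real.exp (2 * α * R) := by
          rw [mul_pow, mul_pow, ← Real.exp_nat_mul]; ring_nf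
  have hexp : Real.exp ((2 * α + 2 * ρ) * R) = Real.exp (2 * α * R) * Real.exp (2 * ρ * R) := by
    rw [← Real.exp_add]; ring_nf
  have ha : 0 < C₀ * Real.exp (2 * ρ * R) := by positivity
  have hgap : 0 ≤ W ^ 2 * Real.exp (2 * α * R) * Real.exp (2 * ρ * R) := by positivity
  rw [hexp, div_mul_eq_mul_div, le_div_iff₀ ha]
  nlinarith [mul_le_mul_of_nonneg_right hsq ha.le]

theorem stmt6_general (C₀ C₁ ρ α : ℝ) (hC₀ : 0 < C₀) (hρ : 0 < ρ) (hα : 0 < α) :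
    ∃ C : ℝ, 0 < C ∧
      ∀ (X : Type) (mX : MeasurableSpace X) (μ : Measure X), SigmaFinite μ →
      ∀ (u : X → ℂ), Measurable u →
      ∀ (W : ℝ), 0 ≤ W →
      (∀ s : ℝ, 0 < s → μ {x | s < ‖u x‖} ≤ ENNReal.ofReal (W ^ 2 / s ^ 2)) →
      ∀ (A : Set X), MeasurableSet A →
      ∀ R : ℝ, 1 ≤ R →
      μ A ≤ ENNReal.ofReal (C₀ * Real.exp (2 * ρ * R)) →
      (∀ x ∈ A, ‖u x‖ ≤ C₁ * W * Real.exp (α * R)) →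
      (∫⁻ x in A, ENNReal.ofReal (‖u x‖ ^ 2) ∂μ)
        ≤ ENNReal.ofReal (C * W ^ 2 * R) := by
  set L := Real.log (1 + C₀ * C₁ ^ 2)
  have hL : 0 ≤ L := Real.log_nonneg (le_add_of_nonneg_right (by positivity))
  refine ⟨1 + L + 2 * α + 2 * ρ, by positivity, ?_⟩
  intro X _ μ _ u hu W hW hweak A hA R hR hμA hbd
  obtain rfl | hWpos := hW.eq_or_lt
  · have hzero : EqOn (fun x => ENNReal.ofReal (‖u x‖ ^ 2)) 0 A := fun x hx => by
      have hux : u x = 0 := by simpa using hbd x hx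
      simp [hux]
    rw [setLIntegral_congr_fun hA hzero]
    simp
  -- `1 + C₀ C₁²` rather than `C₀ C₁²` keeps the ratio of the two cutoffs at least `1`.
  have hB : 1 ≤ (1 + C₀ * C₁ ^ 2) * Real.exp ((2 * α + 2 * ρ) * R) :=
    one_le_mul_of_one_le_of_one_le (le_add_of_nonneg_right (by positivity))
      (Real.one_le_exp (by positivity))
  have hlogB : Real.log ((1 + C₀ * C₁ ^ 2) * Real.exp ((2 * α + 2 * ρ) * R))
      = L + (2 * α + 2 * ρ) * R := by
    rw [Real.log_mul (by positivity) (Real.exp_ne_zero _), Real.log_exp]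
  calc ∫⁻ x in A, ENNReal.ofReal (‖u x‖ ^ 2) ∂μ
      ≤ ENNReal.ofReal (W ^ 2 * (1 + (L + (2 * α + 2 * ρ) * R))) := by
        rw [← hlogB]
        exact lintegral_le_of_meas_lt_le (ae_of_all _ fun x => sq_nonneg _)
          (hu.norm.pow_const 2).aemeasurable (by positivity) (by positivity) hB
          (by rwa [Measure.restrict_apply_univ])
          (fun t ht => (Measure.restrict_apply_le _ _).trans (meas_lt_sq_norm_le hweak ht))
          (ae_restrict_of_forall_mem hA fun x hx =>
            sq_le_of_le_mul_exp hC₀ (norm_nonneg _) (hbd x hx))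
    _ ≤ ENNReal.ofReal ((1 + L + 2 * α + 2 * ρ) * W ^ 2 * R) := by
        gcongr ENNReal.ofReal ?_
        nlinarith [mul_nonneg (mul_nonneg (sq_nonneg W) (add_nonneg zero_le_one hL))
          (sub_nonneg.mpr hR)]

/-- If `u` has weak-L² norm at most `W`, `A` has measure at most `C₀ e^{2ρR}` and
`|u| ≤ C₁ W e^{αR}` on `A`, then `∫_A |u|² dμ ≤ C W² R`, with `C` depending only on
`C₀, C₁, ρ, α`. -/
theorem stmt6 (C₀ C₁ ρ α : ℝ) (hC₀ : 0 < C₀) (hC₁ : 0 < C₁) (hρ : 0 < ρ) (hα : 0 < α) :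
    ∃ C : ℝ, 0 < C ∧
      ∀ (X : Type) (mX : MeasurableSpace X) (μ : Measure X), SigmaFinite μ →
      ∀ (u : X → ℂ), Measurable u →
      ∀ (W : ℝ), 0 ≤ W →
      (∀ s : ℝ, 0 < s → μ {x | s < ‖u x‖} ≤ ENNReal.ofReal (W ^ 2 / s ^ 2)) →
      ∀ (A : Set X), MeasurableSet A →
      ∀ R : ℝ, 1 ≤ R →
      μ A ≤ ENNReal.ofReal (C₀ * Real.exp (2 * ρ * R)) →
      (∀ x ∈ A, ‖u x‖ ≤ C₁ * W * Real.exp (α * R)) →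
      (∫⁻ x in A, ENNReal.ofReal (‖u x‖ ^ 2) ∂μ)
        ≤ ENNReal.ofReal (C * W ^ 2 * R) :=
  stmt6_general C₀ C₁ ρ α hC₀ hρ hα
end

section
/- Let ρ > 0. The function s ↦ s^{1/2} e^{-ρ s} on (0,∞), extended to a right-K-invariant function with respect to a measure whose restriction in the s-variable has density growing like e^{2ρ s}, is not in weak L². Concretely: if g : (0,∞) → [0,∞) satisfies g(s) ≥ C s^{1/2} e^{-ρ s} for all s ≥ s₀ (some s₀, C > 0), and ν is the measure on (0,∞) with dν = e^{2ρ s} ds, then sup_{β>0} β² ν({ s : g(s) > β }) = ∞, i.e. g ∉ L^{2,∞}((0,∞), ν). -/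
open MeasureTheory Set
open scoped ENNReal

/-- A function bounded below by `C s^{1/2} e^{-ρs}` for large `s` is not in weak L²
with respect to the exponentially growing measure `e^{2ρs} ds` on `(0,∞)`. -/
theorem stmt7 (ρ C s₀ : ℝ) (hρ : 0 < ρ) (hC : 0 < C) (hs₀ : 0 < s₀)
    (g : ℝ → ℝ) (hg : ∀ s : ℝ, s₀ ≤ s → C * s ^ ((1 : ℝ) / 2) * Real.exp (-ρ * s) ≤ g s) :
    (⨆ (β : ℝ) (_ : 0 < β),
        ENNReal.ofReal β ^ 2 *
          ((volume.restrict (Ioi (0 : ℝ))).withDensity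
              (fun s => ENNReal.ofReal (Real.exp (2 * ρ * s)))) {s | β < g s}) = ⊤ := by
  set ν := (volume.restrict (Ioi (0 : ℝ))).withDensity
      (fun s => ENNReal.ofReal (Real.exp (2 * ρ * s))) with hν
  set X := (⨆ (β : ℝ) (_ : 0 < β), ENNReal.ofReal β ^ 2 * ν {s | β < g s}) with hX
  set K : ℝ := C ^ 2 / 4 * Real.exp (-(2 * ρ)) with hK
  have hKpos : 0 < K := by positivity
  -- key lower bound
  have key : ∀ s : ℝ, max s₀ 1 ≤ s → ENNReal.ofReal (K * s) ≤ X := by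
    intro s hs
    have hs1 : (1 : ℝ) ≤ s := le_trans (le_max_right _ _) hs
    have hs0 : (0 : ℝ) < s := lt_of_lt_of_le one_pos hs1
    have hss₀ : s₀ ≤ s := le_trans (le_max_left _ _) hs
    set β : ℝ := C * s ^ ((1 : ℝ) / 2) * Real.exp (-ρ * (s + 1)) / 2 with hβ
    have hβpos : 0 < β := by
      have := Real.rpow_pos_of_pos hs0 ((1 : ℝ) / 2)
      positivity
    -- Icc s (s+1) ⊆ {t | β < g t}
    have hsub : Icc s (s + 1) ⊆ {t | β < g t} := by
      intro t ht
      simp only [mem_Icc] at ht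
      have h1 : C * s ^ ((1 : ℝ) / 2) * Real.exp (-ρ * (s + 1)) ≤
          C * t ^ ((1 : ℝ) / 2) * Real.exp (-ρ * t) := by
        apply mul_le_mul
        · apply mul_le_mul_of_nonneg_left _ hC.le
          exact Real.rpow_le_rpow hs0.le ht.1 (by norm_num)
        · apply Real.exp_le_exp.2
          nlinarith [ht.2]
        · positivity
        · have ht0 : (0:ℝ) < t := lt_of_lt_of_le hs0 ht.1
          have := Real.rpow_pos_of_pos ht0 ((1 : ℝ) / 2)
          positivity
      have h2 := hg t (le_trans hss₀ ht.1)
      have : β < C * s ^ ((1 : ℝ) / 2) * Real.exp (-ρ * (s + 1)) := by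
        rw [hβ]; linarith [hβpos]
      exact lt_of_lt_of_le (lt_of_lt_of_le this h1) h2
    -- measure of the interval
    have hmeas : ENNReal.ofReal (Real.exp (2 * ρ * s)) ≤ ν (Icc s (s + 1)) := by
      have hIoi : Icc s (s + 1) ⊆ Ioi 0 := fun t ht => lt_of_lt_of_le hs0 ht.1
      rw [hν, withDensity_apply _ measurableSet_Icc,
        Measure.restrict_restrict measurableSet_Icc,
        inter_eq_self_of_subset_left hIoi]
      calc ENNReal.ofReal (Real.exp (2 * ρ * s))
          = ∫⁻ _ in Icc s (s + 1), ENNReal.ofReal (Real.exp (2 * ρ * s)) := by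
            rw [setLIntegral_const, Real.volume_Icc]
            simp
        _ ≤ ∫⁻ t in Icc s (s + 1), ENNReal.ofReal (Real.exp (2 * ρ * t)) := by
            apply setLIntegral_mono' measurableSet_Icc
            intro t ht
            exact ENNReal.ofReal_le_ofReal (Real.exp_le_exp.2
              (by nlinarith [ht.1] : 2 * ρ * s ≤ 2 * ρ * t))
    have hνset : ENNReal.ofReal (Real.exp (2 * ρ * s)) ≤ ν {t | β < g t} :=
      le_trans hmeas (measure_mono hsub)
    -- arithmetic: β ^ 2 * exp (2ρs) = K * s
    have harith : β ^ 2 * Real.exp (2 * ρ * s) = K * s := by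
      have hsq : (s ^ ((1 : ℝ) / 2)) ^ 2 = s := by
        rw [← Real.rpow_natCast (s ^ ((1:ℝ)/2)) 2, ← Real.rpow_mul hs0.le]
        norm_num
      have e1 : Real.exp (-ρ * (s + 1)) ^ 2 * Real.exp (2 * ρ * s)
          = Real.exp (-(2 * ρ)) := by
        rw [← Real.exp_nat_mul, ← Real.exp_add, Real.exp_eq_exp]
        push_cast; ring
      have e2 : β ^ 2 * Real.exp (2 * ρ * s)
          = (C ^ 2 * s / 4) * (Real.exp (-ρ * (s + 1)) ^ 2 * Real.exp (2 * ρ * s)) := by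
        rw [hβ, div_pow, mul_pow, mul_pow, hsq]; ring
      rw [e2, e1, hK]; ring
    calc ENNReal.ofReal (K * s) = ENNReal.ofReal (β ^ 2 * Real.exp (2 * ρ * s)) := by
          rw [harith]
      _ = ENNReal.ofReal β ^ 2 * ENNReal.ofReal (Real.exp (2 * ρ * s)) := by
          rw [ENNReal.ofReal_mul (by positivity), ENNReal.ofReal_pow hβpos.le]
      _ ≤ ENNReal.ofReal β ^ 2 * ν {t | β < g t} := by
          exact mul_le_mul_right hνset _
      _ ≤ X := le_iSup₂ (f := fun β (_ : 0 < β) => ENNReal.ofReal β ^ 2 * ν {s | β < g s})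
          β hβpos
  -- conclude
  by_contra h
  have hXtop : X ≠ ⊤ := h
  set M := X.toReal with hM
  set s : ℝ := max (max s₀ 1) ((M + 1) / K) with hsdef
  have h1 : ENNReal.ofReal (K * s) ≤ X := key s (le_max_left _ _)
  have h2 : M + 1 ≤ K * s := by
    have : (M + 1) / K ≤ s := le_max_right _ _
    calc M + 1 = K * ((M + 1) / K) := by field_simp
      _ ≤ K * s := by nlinarith
  have h3 : ENNReal.ofReal (M + 1) ≤ X := le_trans (ENNReal.ofReal_le_ofReal h2) h1
  have h4 : X ≤ ENNReal.ofReal M := by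
    rw [hM, ENNReal.ofReal_toReal hXtop]
  have h5 : ENNReal.ofReal (M + 1) ≤ ENNReal.ofReal M := le_trans h3 h4
  have hM0 : 0 ≤ M := ENNReal.toReal_nonneg
  rw [ENNReal.ofReal_le_ofReal_iff hM0] at h5
  linarith
end

section
/- Let ρ > 0 and define f : [0,∞) → (0,∞) by f(r) = e^{-ρ r}(1+r)^{-3/2}, regarded as a function on the measure space [0,∞) with measure dν = J(r) dr, where J(r) = e^{2ρ r} for r ≥ 1 and J(r) is bounded on [0,1]. Then f belongs to the Lorentz space L^{2,1}: ∫_0^∞ f*(t) t^{-1/2} dt < ∞, where f* is the decreasing rearrangement of f with respect to ν. -/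
open MeasureTheory Set
open scoped ENNReal

/-- The radial function `f(r) = e^{-ρr}(1+r)^{-3/2}` belongs to the Lorentz space
`L^{2,1}` of a measure with density `J(r)`, where `J` is bounded on `[0,1]` and equals
`e^{2ρr}` for `r ≥ 1`: its decreasing rearrangement `f*` satisfies
`∫_0^∞ f*(t) t^{-1/2} dt < ∞`. -/
theorem stmt9 (ρ : ℝ) (hρ : 0 < ρ) (J : ℝ → ℝ) (hJmeas : Measurable J)
    (hJ0 : ∀ r, 0 ≤ J r) (Cb : ℝ) (hJb : ∀ r ∈ Icc (0 : ℝ) 1, J r ≤ Cb)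
    (hJ1 : ∀ r : ℝ, 1 ≤ r → J r = Real.exp (2 * ρ * r))
    (ν : Measure ℝ)
    (hν : ν = (volume.restrict (Ici (0 : ℝ))).withDensity (fun r => ENNReal.ofReal (J r)))
    (f : ℝ → ℝ) (hf : ∀ r : ℝ, f r = Real.exp (-ρ * r) * (1 + r) ^ (-(3 : ℝ) / 2))
    (fstar : ℝ → ℝ)
    (hfstar : ∀ t : ℝ,
      fstar t = sInf {s : ℝ | 0 ≤ s ∧ ν {r | s < f r} ≤ ENNReal.ofReal t}) :
    (∫⁻ t in Ioi (0 : ℝ), ENNReal.ofReal (fstar t * t ^ (-(1 : ℝ) / 2))) < ⊤ := by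
  have hρ0 : ρ ≠ 0 := hρ.ne'
  have hρ2 : (0:ℝ) < 2 * ρ := by linarith
  set Cb' : ℝ := max Cb 0 with hCb'def
  have hCb'0 : (0:ℝ) ≤ Cb' := le_max_right _ _
  set M : ℝ := Cb' + 1 / (2 * ρ) + 1 with hMdef
  have hMpos : (0:ℝ) < M := by positivity
  have hfeq : f = fun r => Real.exp (-ρ * r) * (1 + r) ^ (-(3 : ℝ) / 2) := funext hf
  have hfmeas : Measurable f := by rw [hfeq]; fun_prop
  -- basic facts about f
  have hfpos : ∀ r : ℝ, 0 ≤ r → 0 < f r := by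
    intro r hr
    rw [hf r]
    have h1 : (0:ℝ) < 1 + r := by linarith
    positivity
  have hfle1 : ∀ r : ℝ, 0 ≤ r → f r ≤ 1 := by
    intro r hr
    rw [hf r]
    have h1 : Real.exp (-ρ * r) ≤ 1 := Real.exp_le_one_iff.2 (by nlinarith)
    have h2 : (1 + r) ^ (-(3:ℝ)/2) ≤ 1 :=
      Real.rpow_le_one_of_one_le_of_nonpos (by linarith) (by norm_num)
    have h3 : (0:ℝ) ≤ (1 + r) ^ (-(3:ℝ)/2) := Real.rpow_nonneg (by linarith) _
    nlinarith
  have hfmono : ∀ a b : ℝ, 0 ≤ a → a ≤ b → f b ≤ f a := by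
    intro a b ha hab
    rw [hf a, hf b]
    have h1 : Real.exp (-ρ * b) ≤ Real.exp (-ρ * a) := Real.exp_le_exp.2 (by nlinarith)
    have h2 : (1 + b) ^ (-(3:ℝ)/2) ≤ (1 + a) ^ (-(3:ℝ)/2) :=
      Real.rpow_le_rpow_of_nonpos (by linarith) (by linarith) (by norm_num)
    have h3 : (0:ℝ) ≤ (1 + b) ^ (-(3:ℝ)/2) := Real.rpow_nonneg (by linarith) _
    exact mul_le_mul h1 h2 h3 (Real.exp_pos _).le
  -- the superlevel set at level 1 is null
  have hν1 : ν {r | 1 < f r} = 0 := by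
    have hAm : MeasurableSet {r : ℝ | 1 < f r} := measurableSet_lt measurable_const hfmeas
    rw [hν, withDensity_apply _ hAm, Measure.restrict_restrict hAm]
    have he : {r : ℝ | 1 < f r} ∩ Ici 0 = ∅ := by
      ext r
      simp only [mem_inter_iff, mem_setOf_eq, mem_Ici, mem_empty_iff_false, iff_false, not_and]
      intro h1 h2
      exact absurd h1 (not_lt.2 (hfle1 r h2))
    rw [he, Measure.restrict_empty, lintegral_zero_measure]
  -- measure bound for superlevel sets
  have hνbound : ∀ R : ℝ, 1 ≤ R →
      ν {r | f R < f r} ≤ ENNReal.ofReal (M * Real.exp (2 * ρ * R)) := by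
    intro R hR
    have hR0 : (0:ℝ) ≤ R := le_trans zero_le_one hR
    have hAm : MeasurableSet {r : ℝ | f R < f r} := measurableSet_lt measurable_const hfmeas
    rw [hν, withDensity_apply _ hAm, Measure.restrict_restrict hAm]
    have hsub : {r : ℝ | f R < f r} ∩ Ici 0 ⊆ Ico 0 R := by
      rintro r ⟨hr1, hr2⟩
      refine ⟨hr2, ?_⟩
      by_contra h
      push_neg at h
      exact absurd hr1 (not_lt.2 (hfmono R r hR0 h))
    have h1 : ∫⁻ r in Ico (0:ℝ) 1, ENNReal.ofReal (J r) ≤ ENNReal.ofReal Cb' := by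
      calc ∫⁻ r in Ico (0:ℝ) 1, ENNReal.ofReal (J r)
          ≤ ∫⁻ _ in Ico (0:ℝ) 1, ENNReal.ofReal Cb' := by
            refine setLIntegral_mono measurable_const (fun x hx => ?_)
            exact ENNReal.ofReal_le_ofReal
              ((hJb x ⟨hx.1, hx.2.le⟩).trans (le_max_left _ _))
        _ = ENNReal.ofReal Cb' * volume (Ico (0:ℝ) 1) := setLIntegral_const _ _
        _ = ENNReal.ofReal Cb' := by simp [Real.volume_Ico]
    have h2 : ∫⁻ r in Ico (1:ℝ) R, ENNReal.ofReal (J r)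
        ≤ ENNReal.ofReal (Real.exp (2 * ρ * R) / (2 * ρ)) := by
      have hcongr : ∫⁻ r in Ico (1:ℝ) R, ENNReal.ofReal (J r)
          = ∫⁻ r in Ico (1:ℝ) R, ENNReal.ofReal (Real.exp (2 * ρ * r)) := by
        refine setLIntegral_congr_fun measurableSet_Ico (fun x hx => ?_)
        rw [hJ1 x hx.1]
      have hcont : Continuous (fun r : ℝ => Real.exp (2 * ρ * r)) := by fun_prop
      have hi : IntegrableOn (fun r : ℝ => Real.exp (2 * ρ * r)) (Ico 1 R) :=
        (hcont.integrableOn_Icc).mono_set Ico_subset_Icc_self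
      have heq : ∫⁻ r in Ico (1:ℝ) R, ENNReal.ofReal (Real.exp (2 * ρ * r))
          = ENNReal.ofReal (∫ r in Ico (1:ℝ) R, Real.exp (2 * ρ * r)) :=
        (ofReal_integral_eq_lintegral_ofReal hi
          (ae_of_all _ (fun x => (Real.exp_pos _).le))).symm
      have hval : ∫ r in Ico (1:ℝ) R, Real.exp (2 * ρ * r)
          = Real.exp (2 * ρ * R) / (2 * ρ) - Real.exp (2 * ρ * 1) / (2 * ρ) := by
        rw [integral_Ico_eq_integral_Ioo, ← integral_Ioc_eq_integral_Ioo,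
          ← intervalIntegral.integral_of_le hR]
        have hd : ∀ x ∈ Set.uIcc (1:ℝ) R,
            HasDerivAt (fun r => Real.exp (2 * ρ * r) / (2 * ρ)) (Real.exp (2 * ρ * x)) x := by
          intro x _
          have h := (((hasDerivAt_id x).const_mul (2 * ρ)).exp).div_const (2 * ρ)
          refine h.congr_deriv ?_
          field_simp
          rfl
        rw [intervalIntegral.integral_eq_sub_of_hasDerivAt hd (hcont.intervalIntegrable 1 R)]
      rw [hcongr, heq]
      refine ENNReal.ofReal_le_ofReal ?_
      rw [hval]
      have : (0:ℝ) < Real.exp (2 * ρ * 1) / (2 * ρ) := by positivity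
      linarith
    calc ∫⁻ r in {r : ℝ | f R < f r} ∩ Ici 0, ENNReal.ofReal (J r)
        ≤ ∫⁻ r in Ico (0:ℝ) R, ENNReal.ofReal (J r) := lintegral_mono_set hsub
      _ ≤ (∫⁻ r in Ico (0:ℝ) 1, ENNReal.ofReal (J r))
            + ∫⁻ r in Ico (1:ℝ) R, ENNReal.ofReal (J r) := by
          rw [← Ico_union_Ico_eq_Ico zero_le_one hR]
          exact lintegral_union_le _ _ _
      _ ≤ ENNReal.ofReal Cb' + ENNReal.ofReal (Real.exp (2 * ρ * R) / (2 * ρ)) :=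
          add_le_add h1 h2
      _ = ENNReal.ofReal (Cb' + Real.exp (2 * ρ * R) / (2 * ρ)) := by
          rw [← ENNReal.ofReal_add hCb'0 (by positivity)]
      _ ≤ ENNReal.ofReal (M * Real.exp (2 * ρ * R)) := by
          refine ENNReal.ofReal_le_ofReal ?_
          have hE : (1:ℝ) ≤ Real.exp (2 * ρ * R) := by
            rw [Real.one_le_exp_iff]
            positivity
          rw [hMdef]
          have hinv : (0:ℝ) < 1 / (2 * ρ) := by positivity
          have e1 : Cb' ≤ Cb' * Real.exp (2 * ρ * R) := by nlinarith
          have e2 : Real.exp (2 * ρ * R) / (2 * ρ)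
              = (1 / (2 * ρ)) * Real.exp (2 * ρ * R) := by ring
          nlinarith [Real.exp_pos (2 * ρ * R)]
  -- fstar bounds
  have hSnonempty : ∀ t : ℝ, (1:ℝ) ∈ {s : ℝ | 0 ≤ s ∧ ν {r | s < f r} ≤ ENNReal.ofReal t} :=
    fun t => ⟨zero_le_one, by rw [hν1]; exact zero_le⟩
  have hfstar_le1 : ∀ t : ℝ, fstar t ≤ 1 := by
    intro t
    rw [hfstar t]
    exact csInf_le ⟨0, fun x hx => hx.1⟩ (hSnonempty t)
  have hfstar_le : ∀ t R : ℝ, 1 ≤ R → M * Real.exp (2 * ρ * R) ≤ t → fstar t ≤ f R := by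
    intro t R hR ht
    rw [hfstar t]
    refine csInf_le ⟨0, fun x hx => hx.1⟩ ?_
    exact ⟨(hfpos R (le_trans zero_le_one hR)).le,
      le_trans (hνbound R hR) (ENNReal.ofReal_le_ofReal ht)⟩
  -- the threshold
  set T : ℝ := M * Real.exp (2 * ρ) with hTdef
  have hT0 : (0:ℝ) < T := by positivity
  -- split the integral
  have hsplit : Ioi (0:ℝ) = Ioc 0 T ∪ Ioi T := (Ioc_union_Ioi_eq_Ioi hT0.le).symm
  rw [hsplit, lintegral_union measurableSet_Ioi Ioc_disjoint_Ioi_same]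
  refine ENNReal.add_lt_top.2 ⟨?_, ?_⟩
  · -- small t : bound fstar by 1
    have hmono : ∫⁻ t in Ioc (0:ℝ) T, ENNReal.ofReal (fstar t * t ^ (-(1:ℝ)/2))
        ≤ ∫⁻ t in Ioc (0:ℝ) T, ENNReal.ofReal (t ^ (-(1:ℝ)/2)) := by
      refine setLIntegral_mono (by fun_prop) (fun x hx => ?_)
      refine ENNReal.ofReal_le_ofReal ?_
      have hx0 : (0:ℝ) < x := hx.1
      have := mul_le_mul_of_nonneg_right (hfstar_le1 x)
        (Real.rpow_nonneg hx0.le (-(1:ℝ)/2))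
      linarith
    have hint : IntegrableOn (fun t : ℝ => t ^ (-(1:ℝ)/2)) (Ioc 0 T) :=
      (intervalIntegral.intervalIntegrable_rpow' (a := 0) (b := T) (r := -(1:ℝ)/2) (by norm_num)).1
    exact lt_of_le_of_lt hmono hint.lintegral_lt_top
  · -- large t
    have hlogT : Real.log T = Real.log M + 2 * ρ := by
      rw [hTdef, Real.log_mul hMpos.ne' (Real.exp_pos _).ne', Real.log_exp]
    have huT : ∀ x : ℝ, T ≤ x → 2 ≤ 1 + (Real.log x - Real.log M) / (2 * ρ) := by
      intro x hx
      have hlog : Real.log T ≤ Real.log x := Real.log_le_log hT0 hx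
      have h1 : 2 * ρ ≤ Real.log x - Real.log M := by rw [hlogT] at hlog; linarith
      have h2 : 1 ≤ (Real.log x - Real.log M) / (2 * ρ) := (one_le_div hρ2).2 h1
      linarith
    have hptwise : ∀ t : ℝ, t ∈ Ioi T → fstar t * t ^ (-(1:ℝ)/2)
        ≤ M ^ ((1:ℝ)/2) * (1 + (Real.log t - Real.log M) / (2 * ρ)) ^ (-(3:ℝ)/2) * t⁻¹ := by
      intro t ht
      have ht' : T < t := ht
      have ht0 : (0:ℝ) < t := lt_trans hT0 ht'
      set R : ℝ := (Real.log t - Real.log M) / (2 * ρ) with hRdef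
      have hR1 : (1:ℝ) ≤ R := by
        have := huT t ht'.le
        rw [← hRdef] at this
        linarith
      have hexp2 : Real.exp (2 * ρ * R) = t / M := by
        have harg : 2 * ρ * R = Real.log t - Real.log M := by
          rw [hRdef]; field_simp
        rw [harg, Real.exp_sub, Real.exp_log ht0, Real.exp_log hMpos]
      have hMt : M * Real.exp (2 * ρ * R) = t := by
        rw [hexp2]; field_simp
      have hle := hfstar_le t R hR1 hMt.le
      have hfR : f R = M ^ ((1:ℝ)/2) * t ^ (-(1:ℝ)/2) * (1 + R) ^ (-(3:ℝ)/2) := by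
        rw [hf R]
        have harg : -ρ * R = Real.log M * ((1:ℝ)/2) + Real.log t * (-(1:ℝ)/2) := by
          rw [hRdef]; field_simp; ring
        rw [harg, Real.exp_add, Real.exp_mul, Real.exp_mul, Real.exp_log hMpos,
          Real.exp_log ht0]
      have htt : t ^ (-(1:ℝ)/2) * t ^ (-(1:ℝ)/2) = t⁻¹ := by
        rw [← Real.rpow_add ht0]
        norm_num [Real.rpow_neg_one]
      calc fstar t * t ^ (-(1:ℝ)/2)
          ≤ f R * t ^ (-(1:ℝ)/2) :=
            mul_le_mul_of_nonneg_right hle (Real.rpow_nonneg ht0.le _)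
        _ = M ^ ((1:ℝ)/2) * (1 + R) ^ (-(3:ℝ)/2) * t⁻¹ := by
            rw [hfR, ← htt]; ring
    have hint : IntegrableOn
        (fun t : ℝ => M ^ ((1:ℝ)/2)
          * (1 + (Real.log t - Real.log M) / (2 * ρ)) ^ (-(3:ℝ)/2) * t⁻¹) (Ioi T) := by
      refine integrableOn_Ioi_deriv_of_nonneg'
        (g := fun t : ℝ => (-(2:ℝ)) * (2 * ρ) * M ^ ((1:ℝ)/2)
          * (1 + (Real.log t - Real.log M) / (2 * ρ)) ^ (-(1:ℝ)/2))
        (fun x hx => ?_) (fun x hx => ?_)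
        (l := (-(2:ℝ)) * (2 * ρ) * M ^ ((1:ℝ)/2) * 0) ?_
      · -- derivative
        have hx0 : (0:ℝ) < x := lt_of_lt_of_le hT0 hx
        have hu2 : (2:ℝ) ≤ 1 + (Real.log x - Real.log M) / (2 * ρ) := huT x hx
        have hux : (1 + (Real.log x - Real.log M) / (2 * ρ)) ≠ 0 := by linarith
        have hdu : HasDerivAt (fun t : ℝ => 1 + (Real.log t - Real.log M) / (2 * ρ))
            (x⁻¹ / (2 * ρ)) x :=
          (((Real.hasDerivAt_log hx0.ne').sub_const (Real.log M)).div_const (2 * ρ)).const_add 1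
        have hdr := hdu.rpow_const (p := -(1:ℝ)/2) (Or.inl hux)
        have h := hdr.const_mul ((-(2:ℝ)) * (2 * ρ) * M ^ ((1:ℝ)/2))
        refine h.congr_deriv ?_
        have he : (-(1:ℝ)/2 - 1) = -(3:ℝ)/2 := by norm_num
        rw [he]
        field_simp
      · -- nonnegativity
        have hx0 : (0:ℝ) < x := lt_trans hT0 hx
        have hu0 : (0:ℝ) ≤ 1 + (Real.log x - Real.log M) / (2 * ρ) := by
          linarith [huT x hx.le]
        have := Real.rpow_nonneg hu0 (-(3:ℝ)/2)
        have hM' : (0:ℝ) ≤ M ^ ((1:ℝ)/2) := Real.rpow_nonneg hMpos.le _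
        positivity
      · -- limit at infinity
        refine Filter.Tendsto.const_mul _ ?_
        have hu_top : Filter.Tendsto (fun t : ℝ => 1 + (Real.log t - Real.log M) / (2 * ρ))
            Filter.atTop Filter.atTop := by
          refine Filter.tendsto_atTop_add_const_left Filter.atTop 1 ?_
          refine Filter.Tendsto.atTop_div_const hρ2 ?_
          simpa [sub_eq_add_neg] using
            Filter.tendsto_atTop_add_const_right Filter.atTop (-Real.log M) Real.tendsto_log_atTop
        have h := (tendsto_rpow_neg_atTop (y := (1:ℝ)/2) (by norm_num)).comp hu_top
        simpa [Function.comp_def, neg_div] using h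
    have hmono : ∫⁻ t in Ioi T, ENNReal.ofReal (fstar t * t ^ (-(1:ℝ)/2))
        ≤ ∫⁻ t in Ioi T, ENNReal.ofReal (M ^ ((1:ℝ)/2)
          * (1 + (Real.log t - Real.log M) / (2 * ρ)) ^ (-(3:ℝ)/2) * t⁻¹) := by
      have hlm : Measurable Real.log := Real.measurable_log
      refine setLIntegral_mono (by fun_prop) (fun x hx => ?_)
      exact ENNReal.ofReal_le_ofReal (hptwise x hx)
    exact lt_of_le_of_lt hmono hint.lintegral_lt_top
end

section
/- Let μ be a σ-finite measure, u measurable with sup_{s>0} s μ({|u|>s})^{1/2} = ‖u‖_{2,∞} < ∞, and suppose there exist ρ, α, C > 0 such that μ(B_R) ≤ C e^{2ρR} and |u| ≤ C‖u‖_{2,∞} e^{αR} μ-a.e. on B_R, for an increasing family of sets B_R (R ≥ 1) exhausting the space. Then M(u) := limsup_{R→∞} (R^{-1} ∫_{B_R} |u|² dμ)^{1/2} ≤ C' ‖u‖_{2,∞} for a constant C' depending only on ρ, α, C. -/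
/-!
By the layer-cake formula, `∫_{B_R} |u|² = ∫₀^∞ μ(B_R ∩ {|u|² > t}) dt`. The integrand is
at most `μ(B_R) ≤ C e^{2ρR}` for `t ≤ W² e^{-2ρR}`, at most `W²/t` by the weak-L² bound up to
the pointwise bound `(C W e^{αR})²`, and zero beyond it. Hence
`∫_{B_R} |u|² ≤ C W² + W² log(…)`, where the logarithm is `O(R)`; dividing by `R` gives
`M(u)² = O(W²)`.
-/

open MeasureTheory Set Filter
open scoped ENNReal

theorem lintegral_Ioc_ofReal_const_div {c a b : ℝ} (hc : 0 ≤ c) (ha : 0 < a) (hab : a ≤ b) :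
    ∫⁻ t in Ioc a b, ENNReal.ofReal (c / t) = ENNReal.ofReal (c * Real.log (b / a)) := by
  have hint : IntegrableOn (fun t : ℝ => c / t) (Ioc a b) :=
    ((continuousOn_const.div continuousOn_id fun t ht => (ha.trans_le ht.1).ne').integrableOn_Icc
      ).mono_set Ioc_subset_Icc_self
  have hnonneg : 0 ≤ᵐ[volume.restrict (Ioc a b)] fun t : ℝ => c / t :=
    (ae_restrict_iff' measurableSet_Ioc).mpr
      (.of_forall fun t ht => div_nonneg hc (ha.trans ht.1).le)
  rw [← ofReal_integral_eq_lintegral_ofReal hint hnonneg, ← intervalIntegral.integral_of_le hab]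
  simp_rw [div_eq_mul_one_div c]
  have hzero : (0 : ℝ) ∉ uIcc a b := by
    rw [uIcc_of_le hab]
    exact fun h => ha.not_ge h.1
  rw [intervalIntegral.integral_const_mul, integral_one_div hzero]

section

variable {X : Type*} [MeasurableSpace X]

theorem lintegral_le_of_meas_lt_le_div {ν : Measure X} {g : X → ℝ} {a b c : ℝ}
    (hg : AEMeasurable g ν) (hg0 : 0 ≤ᵐ[ν] g)
    (hweak : ∀ t, 0 < t → ν {x | t < g x} ≤ ENNReal.ofReal (c / t))
    (hgb : ∀ᵐ x ∂ν, g x ≤ b) (hc : 0 ≤ c) (ha : 0 < a) (hab : a ≤ b) :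
    ∫⁻ x, ENNReal.ofReal (g x) ∂ν
      ≤ ν univ * ENNReal.ofReal a + ENNReal.ofReal (c * Real.log (b / a)) := by
  have hsplit : Ioi (0 : ℝ) = Ioc 0 a ∪ Ioc a b ∪ Ioi b := by
    rw [union_assoc, Ioc_union_Ioi_eq_Ioi hab, Ioc_union_Ioi_eq_Ioi ha.le]
  have hlow : ∫⁻ t in Ioc 0 a, ν {x | t < g x} ≤ ν univ * ENNReal.ofReal a := by
    calc ∫⁻ t in Ioc 0 a, ν {x | t < g x} ≤ ∫⁻ _ in Ioc 0 a, ν univ :=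
          lintegral_mono fun t => measure_mono (subset_univ _)
      _ = ν univ * ENNReal.ofReal a := by rw [setLIntegral_const, Real.volume_Ioc, sub_zero]
  have hmid : ∫⁻ t in Ioc a b, ν {x | t < g x} ≤ ENNReal.ofReal (c * Real.log (b / a)) := by
    rw [← lintegral_Ioc_ofReal_const_div hc ha hab]
    exact setLIntegral_mono' measurableSet_Ioc fun t ht => hweak t (ha.trans ht.1)
  have hhigh : ∫⁻ t in Ioi b, ν {x | t < g x} = 0 := by
    rw [setLIntegral_congr_fun measurableSet_Ioi (g := fun _ => 0), lintegral_zero]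
    exact fun t ht => measure_mono_null (fun x hx => not_le.mpr (lt_trans ht hx)) (ae_iff.mp hgb)
  calc ∫⁻ x, ENNReal.ofReal (g x) ∂ν = ∫⁻ t in Ioi 0, ν {x | t < g x} :=
        lintegral_eq_lintegral_meas_lt ν hg0 hg
    _ ≤ (∫⁻ t in Ioc 0 a, ν {x | t < g x}) + (∫⁻ t in Ioc a b, ν {x | t < g x})
          + ∫⁻ t in Ioi b, ν {x | t < g x} := by
        rw [hsplit]
        exact (lintegral_union_le _ _ _).trans (add_le_add_left (lintegral_union_le _ _ _) _)
    _ ≤ _ := by rw [hhigh, add_zero]; exact add_le_add hlow hmid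

theorem meas_lt_norm_sq_le {E : Type*} [NormedAddCommGroup E] {μ : Measure X} {u : X → E}
    {c t : ℝ} (hweak : ∀ s, 0 < s → μ {x | s < ‖u x‖} ≤ ENNReal.ofReal (c / s ^ 2)) (ht : 0 < t) :
    μ {x | t < ‖u x‖ ^ 2} ≤ ENNReal.ofReal (c / t) := by
  have hset : {x | t < ‖u x‖ ^ 2} = {x | √t < ‖u x‖} := by
    ext x; simp [Real.sqrt_lt ht.le (norm_nonneg _)]
  simpa [hset, Real.sq_sqrt ht.le] using hweak √t (Real.sqrt_pos.mpr ht)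

theorem setLIntegral_norm_sq_le {E : Type*} [NormedAddCommGroup E] [MeasurableSpace E]
    [OpensMeasurableSpace E] {μ : Measure X} {u : X → E} {B : Set X} {ρ α C W R : ℝ}
    (hρ : 0 ≤ ρ) (hα : 0 ≤ α) (hC : 0 ≤ C) (hR : 0 ≤ R) (hu : AEMeasurable u μ)
    (hweak : ∀ s, 0 < s → μ {x | s < ‖u x‖} ≤ ENNReal.ofReal (W ^ 2 / s ^ 2))
    (hvol : μ B ≤ ENNReal.ofReal (C * Real.exp (2 * ρ * R)))
    (hbdd : ∀ᵐ x ∂μ.restrict B, ‖u x‖ ≤ C * W * Real.exp (α * R)) :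
    ∫⁻ x in B, ENNReal.ofReal (‖u x‖ ^ 2) ∂μ
      ≤ ENNReal.ofReal (W ^ 2 * (C + 2 * Real.log (max C 1) + 2 * (α + ρ) * R)) := by
  rcases le_or_gt W 0 with hW | hW
  · have hzero : ∀ᵐ x ∂μ.restrict B, ENNReal.ofReal (‖u x‖ ^ 2) = 0 :=
      hbdd.mono fun x hx => by
        have : C * W * Real.exp (α * R) ≤ 0 :=
          mul_nonpos_of_nonpos_of_nonneg (mul_nonpos_of_nonneg_of_nonpos hC hW) (Real.exp_pos _).le
        rw [norm_le_zero_iff.mp (hx.trans this), norm_zero]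
        simp
    rw [lintegral_congr_ae hzero, lintegral_zero]
    exact zero_le
  set a := W ^ 2 * Real.exp (-(2 * ρ * R))
  set b := (max C 1 * W * Real.exp (α * R)) ^ 2
  have hweak_sq : ∀ t, 0 < t → μ.restrict B {x | t < ‖u x‖ ^ 2} ≤ ENNReal.ofReal (W ^ 2 / t) :=
    fun t ht => (Measure.restrict_apply_le _ _).trans (meas_lt_norm_sq_le hweak ht)
  have hbdd_sq : ∀ᵐ x ∂μ.restrict B, ‖u x‖ ^ 2 ≤ b := hbdd.mono fun x hx =>
    pow_le_pow_left₀ (norm_nonneg _) (hx.trans (by gcongr; exact le_max_left _ _)) 2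
  have ha : 0 < a := by positivity
  have hab : a ≤ b := calc
    a ≤ W ^ 2 := mul_le_of_le_one_right (sq_nonneg W) (Real.exp_le_one_iff.mpr (by nlinarith))
    _ ≤ b := by
      refine pow_le_pow_left₀ hW.le ?_ 2
      calc W = 1 * W * 1 := by ring
        _ ≤ max C 1 * W * Real.exp (α * R) := by
          gcongr
          exacts [le_max_right _ _, Real.one_le_exp (by positivity)]
  have hlog : Real.log (b / a) = 2 * Real.log (max C 1) + 2 * (α + ρ) * R := by
    have hM : 0 < max C 1 := lt_max_of_lt_right one_pos
    rw [Real.log_div (by positivity) ha.ne', Real.log_pow,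
      Real.log_mul (by positivity) (by positivity), Real.log_mul hM.ne' hW.ne', Real.log_mul (by positivity) (by positivity), Real.log_pow,
      Real.log_exp, Real.log_exp]
    push_cast
    ring
  have hlog_nonneg : 0 ≤ Real.log (b / a) :=
    Real.log_nonneg ((one_le_div ha).mpr hab)
  have hvol_a : μ B * ENNReal.ofReal a ≤ ENNReal.ofReal (C * W ^ 2) := calc
    μ B * ENNReal.ofReal a ≤ ENNReal.ofReal (C * Real.exp (2 * ρ * R)) * ENNReal.ofReal a := by
      gcongr
    _ = ENNReal.ofReal (C * W ^ 2) := by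
      rw [← ENNReal.ofReal_mul (by positivity), mul_mul_mul_comm, ← Real.exp_add, add_neg_cancel,
        Real.exp_zero, mul_one]
  calc ∫⁻ x in B, ENNReal.ofReal (‖u x‖ ^ 2) ∂μ
      ≤ μ.restrict B univ * ENNReal.ofReal a + ENNReal.ofReal (W ^ 2 * Real.log (b / a)) :=
        lintegral_le_of_meas_lt_le_div (hu.norm.pow_const 2).restrict
          (.of_forall fun x => sq_nonneg _) hweak_sq hbdd_sq (sq_nonneg W) ha hab
    _ ≤ ENNReal.ofReal (C * W ^ 2) + ENNReal.ofReal (W ^ 2 * Real.log (b / a)) := by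
        rw [Measure.restrict_apply_univ]; gcongr
    _ = _ := by
        rw [← ENNReal.ofReal_add (by positivity) (mul_nonneg (sq_nonneg W) hlog_nonneg), hlog]
        ring_nf

end

theorem limsup_rpow_half_div_le {F : ℝ → ℝ≥0∞} {a : ℝ} (ha : 0 ≤ a)
    (hF : ∀ᶠ R in atTop, F R ≤ ENNReal.ofReal (a * R)) :
    limsup (fun R => (F R / ENNReal.ofReal R) ^ ((1 : ℝ) / 2)) atTop ≤ ENNReal.ofReal √a := by
  refine limsup_le_of_le (by isBoundedDefault) ?_
  filter_upwards [hF, eventually_ge_atTop 0] with R hFR hR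
  rw [Real.sqrt_eq_rpow, ← ENNReal.ofReal_rpow_of_nonneg ha (by norm_num)]
  refine ENNReal.rpow_le_rpow (ENNReal.div_le_of_le_mul ?_) (by norm_num)
  rwa [← ENNReal.ofReal_mul ha]

/-- If `u` has weak-L² norm at most `W`, the sets `B_R` (R ≥ 1) are increasing with
`μ(B_R) ≤ C e^{2ρR}`, exhaust the space, and `|u| ≤ C W e^{αR}` a.e. on `B_R`, then
`M(u) = limsup_{R→∞} (R⁻¹ ∫_{B_R} |u|²)^{1/2} ≤ C' W` with `C'` depending only on
`ρ, α, C`. -/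
theorem stmt18 (ρ α C : ℝ) (hρ : 0 < ρ) (hα : 0 < α) (hC : 0 < C) :
    ∃ C' : ℝ, 0 < C' ∧
      ∀ (X : Type) (mX : MeasurableSpace X) (μ : Measure X), SigmaFinite μ →
      ∀ (u : X → ℂ), Measurable u →
      ∀ (W : ℝ), 0 ≤ W →
      (∀ s : ℝ, 0 < s → μ {x | s < ‖u x‖} ≤ ENNReal.ofReal (W ^ 2 / s ^ 2)) →
      ∀ (B : ℝ → Set X), (∀ R, MeasurableSet (B R)) →
      (∀ R₁ R₂ : ℝ, 1 ≤ R₁ → R₁ ≤ R₂ → B R₁ ⊆ B R₂) →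
      (∀ x : X, ∃ R : ℝ, 1 ≤ R ∧ x ∈ B R) →
      (∀ R : ℝ, 1 ≤ R → μ (B R) ≤ ENNReal.ofReal (C * Real.exp (2 * ρ * R))) →
      (∀ R : ℝ, 1 ≤ R →
        ∀ᵐ x ∂(μ.restrict (B R)), ‖u x‖ ≤ C * W * Real.exp (α * R)) →
      limsup
          (fun R : ℝ =>
            ((∫⁻ x in B R, ENNReal.ofReal (‖u x‖ ^ 2) ∂μ)
                / ENNReal.ofReal R) ^ ((1 : ℝ) / 2))
          atTop
        ≤ ENNReal.ofReal (C' * W) := by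
  set K := C + 2 * Real.log (max C 1) + 2 * (α + ρ)
  have hlogM : 0 ≤ Real.log (max C 1) := Real.log_nonneg (le_max_right _ _)
  have hK : 0 < K := by positivity
  refine ⟨√K, Real.sqrt_pos.mpr hK, fun X _ μ _ u hu W hW hweak B _ _ _ hvol hbdd => ?_⟩
  have hsqrt : √(W ^ 2 * K) = √K * W := by
    rw [Real.sqrt_mul (sq_nonneg W), Real.sqrt_sq hW, mul_comm]
  refine hsqrt ▸ limsup_rpow_half_div_le (by positivity) ?_
  filter_upwards [eventually_ge_atTop 1] with R hR
  refine (setLIntegral_norm_sq_le hρ.le hα.le hC.le (by linarith) hu.aemeasurable hweak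
    (hvol R hR) (hbdd R hR)).trans (ENNReal.ofReal_le_ofReal ?_)
  have : 0 ≤ (C + 2 * Real.log (max C 1)) * (R - 1) := by nlinarith
  nlinarith [sq_nonneg W]
end
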